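/- arXiv:1408.0716 — 4 statements merged into one kernel-verified Lean document; each statement's English description precedes it below -/
import Mathlib

section
/- Let a : ℝ → ℝ be continuously differentiable with a(t) > 0 for all t, let f : [0,∞) → ℝ be continuously differentiable and nonnegative, and let G : ℝ × (0,∞) → ℝ be continuously differentiable. For (x,y) ∈ ℝ² write r = √(x² + y²), and define ρ(t,x,y) = f(r/a(t))/a(t)², u₁(t,x,y) = (a'(t)/a(t))·x − (G(t,r)/r)·y, and u₂(t,x,y) = (G(t,r)/r)·x + (a'(t)/a(t))·y. Then the two-dimensional continuity equation ∂ρ/∂t + ∂(ρu₁)/∂x + ∂(ρu₂)/∂y = 0 holds at every time t and every point (x,y) with r > 0. -/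
/-- The planar radius `r = √(x² + y²)`. -/
noncomputable def rad (x y : ℝ) : ℝ := Real.sqrt (x ^ 2 + y ^ 2)

/-!
The velocity splits into the dilation field `(a'/a) X` and the rotation field `(G/r) X^⊥`,
and `ρ` is radial. A radial multiple of `X^⊥` is divergence free, while for a radial density
`R(r)` one has `div (R X) = r R' + 2R`. Since `ρ(t, ·) = R(r)` with `R(s) = f(s/a)/a²` is the
mass-preserving rescaling of `f`, its time derivative is exactly `-(a'/a) (r R' + 2R)`.
-/

lemma rad_sq (x y : ℝ) : rad x y ^ 2 = x ^ 2 + y ^ 2 :=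
  Real.sq_sqrt (by positivity)

section Radial

variable {x y : ℝ}

lemma hasDerivAt_rad_left (h : 0 < rad x y) :
    HasDerivAt (fun χ => rad χ y) (x / rad x y) x := by
  have hsum : HasDerivAt (fun χ : ℝ => χ ^ 2 + y ^ 2) (2 * x) x := by
    simpa using (hasDerivAt_pow 2 x).add_const (y ^ 2)
  unfold rad at h ⊢
  convert hsum.sqrt (Real.sqrt_pos.mp h).ne' using 1
  field_simp

lemma hasDerivAt_rad_right (h : 0 < rad x y) :
    HasDerivAt (fun υ => rad x υ) (y / rad x y) y := by
  have hsum : HasDerivAt (fun υ : ℝ => x ^ 2 + υ ^ 2) (2 * y) y := by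
    simpa using (hasDerivAt_pow 2 y).const_add (x ^ 2)
  unfold rad at h ⊢
  convert hsum.sqrt (Real.sqrt_pos.mp h).ne' using 1
  field_simp

lemma HasDerivAt.comp_rad_left {φ : ℝ → ℝ} {φ' : ℝ} (hφ : HasDerivAt φ φ' (rad x y))
    (h : 0 < rad x y) : HasDerivAt (fun χ => φ (rad χ y)) (φ' * (x / rad x y)) x :=
  hφ.comp x (hasDerivAt_rad_left h)

lemma HasDerivAt.comp_rad_right {φ : ℝ → ℝ} {φ' : ℝ} (hφ : HasDerivAt φ φ' (rad x y))
    (h : 0 < rad x y) : HasDerivAt (fun υ => φ (rad x υ)) (φ' * (y / rad x y)) y :=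
  hφ.comp y (hasDerivAt_rad_right h)

/-- The divergence of `R(r) (c X + g(r) X^⊥)`, where `X = (x, y)` and `X^⊥ = (-y, x)`. -/
theorem divergence_radial_dilation_rotation {R g : ℝ → ℝ} {R' : ℝ} (c : ℝ)
    (hR : HasDerivAt R R' (rad x y)) (hg : DifferentiableAt ℝ g (rad x y))
    (h : 0 < rad x y) :
    deriv (fun χ => R (rad χ y) * (c * χ - g (rad χ y) * y)) x
      + deriv (fun υ => R (rad x υ) * (g (rad x υ) * x + c * υ)) y
      = c * (rad x y * R' + 2 * R (rad x y)) := by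
  have hg' := hg.hasDerivAt
  have hflux₁ := (hR.comp_rad_left h).fun_mul
    (((hasDerivAt_id' x).const_mul c).fun_sub ((hg'.comp_rad_left h).mul_const y))
  have hflux₂ := (hR.comp_rad_right h).fun_mul
    (((hg'.comp_rad_right h).mul_const x).fun_add ((hasDerivAt_id' y).const_mul c))
  rw [hflux₁.deriv, hflux₂.deriv]
  field_simp
  linear_combination -(c * R') * rad_sq x y

end Radial

theorem hasDerivAt_mass_preserving_rescale {a f : ℝ → ℝ} {a' f' t : ℝ} (r : ℝ)
    (ha : HasDerivAt a a' t) (hf : HasDerivAt f f' (r / a t)) (hat : a t ≠ 0) :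
    HasDerivAt (fun τ => f (r / a τ) / a τ ^ 2)
      (-(a' / a t) * (r * (f' / a t ^ 3) + 2 * (f (r / a t) / a t ^ 2))) t := by
  have hquot := hf.comp t ((hasDerivAt_const t r).fun_div ha hat)
  refine (hquot.fun_div (ha.fun_pow 2) (pow_ne_zero 2 hat)).congr_deriv ?_
  simp only [Function.comp_apply]
  field_simp
  ring

theorem continuity_equation_with_rotation_general
    (a f : ℝ → ℝ) (G : ℝ → ℝ → ℝ)
    (ha : ContDiff ℝ 1 a) (hapos : ∀ t, 0 < a t)
    (hf : ContDiffOn ℝ 1 f (Set.Ici 0))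
    (hG : ContDiffOn ℝ 1 (fun p : ℝ × ℝ => G p.1 p.2) (Set.univ ×ˢ Set.Ioi 0))
    (ρ u₁ u₂ : ℝ → ℝ → ℝ → ℝ)
    (hρ : ∀ t x y, ρ t x y = f (rad x y / a t) / (a t) ^ 2)
    (hu₁ : ∀ t x y, u₁ t x y = (deriv a t / a t) * x - (G t (rad x y) / rad x y) * y)
    (hu₂ : ∀ t x y, u₂ t x y = (G t (rad x y) / rad x y) * x + (deriv a t / a t) * y) :
    ∀ t x y, 0 < rad x y →
      deriv (fun τ => ρ τ x y) t
        + deriv (fun χ => ρ t χ y * u₁ t χ y) x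
        + deriv (fun υ => ρ t x υ * u₂ t x υ) y = 0 := by
  intro t x y hr
  have hat : a t ≠ 0 := (hapos t).ne'
  have ha' : HasDerivAt a (deriv a t) t := (ha.differentiable one_ne_zero t).hasDerivAt
  have hf' : HasDerivAt f (deriv f (rad x y / a t)) (rad x y / a t) :=
    ((hf.contDiffAt (Ici_mem_nhds (div_pos hr (hapos t)))).differentiableAt
      one_ne_zero).hasDerivAt
  have hG' : DifferentiableAt ℝ (G t) (rad x y) :=
    ((hG.contDiffAt (prod_mem_nhds Filter.univ_mem (Ioi_mem_nhds hr))).differentiableAt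
      one_ne_zero).comp (rad x y) (f := fun s => (t, s)) (by fun_prop)
  have hR : HasDerivAt (fun s => f (s / a t) / a t ^ 2)
      (deriv f (rad x y / a t) * (1 / a t) / a t ^ 2) (rad x y) :=
    (hf'.comp (rad x y) ((hasDerivAt_id' _).div_const _)).div_const _
  have hdiv := divergence_radial_dilation_rotation (deriv a t / a t) hR
    (g := fun s => G t s / s) (hG'.div differentiableAt_id hr.ne') hr
  simp only [hρ, hu₁, hu₂]
  rw [(hasDerivAt_mass_preserving_rescale (rad x y) ha' hf' hat).deriv, add_assoc, hdiv]
  field_simp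
  ring

/-- For `ρ(t,x,y) = f(r/a(t))/a(t)²`,
`u₁ = (a'(t)/a(t))·x − (G(t,r)/r)·y`, `u₂ = (G(t,r)/r)·x + (a'(t)/a(t))·y`,
the 2D continuity equation `ρ_t + (ρu₁)_x + (ρu₂)_y = 0` holds wherever `r > 0`. -/
theorem continuity_equation_with_rotation
    (a f : ℝ → ℝ) (G : ℝ → ℝ → ℝ)
    (ha : ContDiff ℝ 1 a) (hapos : ∀ t, 0 < a t)
    (hf : ContDiffOn ℝ 1 f (Set.Ici 0)) (hfnn : ∀ s ∈ Set.Ici (0 : ℝ), 0 ≤ f s)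
    (hG : ContDiffOn ℝ 1 (fun p : ℝ × ℝ => G p.1 p.2) (Set.univ ×ˢ Set.Ioi 0))
    (ρ u₁ u₂ : ℝ → ℝ → ℝ → ℝ)
    (hρ : ∀ t x y, ρ t x y = f (rad x y / a t) / (a t) ^ 2)
    (hu₁ : ∀ t x y, u₁ t x y = (deriv a t / a t) * x - (G t (rad x y) / rad x y) * y)
    (hu₂ : ∀ t x y, u₂ t x y = (G t (rad x y) / rad x y) * x + (deriv a t / a t) * y) :
    ∀ t x y, 0 < rad x y →
      deriv (fun τ => ρ τ x y) t
        + deriv (fun χ => ρ t χ y * u₁ t χ y) x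
        + deriv (fun υ => ρ t x υ * u₂ t x υ) y = 0 :=
  continuity_equation_with_rotation_general a f G ha hapos hf hG ρ u₁ u₂ hρ hu₁ hu₂
end

section
/- Let λ > 0 and ξ ≠ 0 be real constants, and let a : I → (0,∞) be a twice continuously differentiable solution of the Emden equation a''(t) = −λ/a(t) + ξ²/a(t)³ on an interval I with a(0) = a₀ > 0 and a'(0) = a₁. Then there exist constants 0 < m ≤ M (depending only on λ, ξ, a₀, a₁) such that m ≤ a(t) ≤ M for all t ∈ I, and moreover |a'(t)| is uniformly bounded on I. -/
set_option maxHeartbeats 1000000 in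
/-- For `λ > 0`, `ξ ≠ 0`, any positive C² solution of the Emden equation
`a'' = −λ/a + ξ²/a³` on an interval `I ∋ 0` with `a(0) = a₀ > 0`, `a'(0) = a₁` satisfies
`m ≤ a(t) ≤ M` on `I` for some constants `0 < m ≤ M`, and `|a'|` is uniformly bounded
on `I`. -/
theorem emden_solution_bounded
    (lam ξ a₀ a₁ : ℝ) (hlam : 0 < lam) (hξ : ξ ≠ 0) (ha₀ : 0 < a₀)
    (I : Set ℝ) (hI : Convex ℝ I) (h0 : (0 : ℝ) ∈ I)
    (a a' a'' : ℝ → ℝ)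
    (hpos : ∀ t ∈ I, 0 < a t)
    (hd : ∀ t ∈ I, HasDerivAt a (a' t) t)
    (hd' : ∀ t ∈ I, HasDerivAt a' (a'' t) t)
    (hcont : ContinuousOn a'' I)
    (hode : ∀ t ∈ I, a'' t = -lam / a t + ξ ^ 2 / (a t) ^ 3)
    (hinit : a 0 = a₀) (hinit' : a' 0 = a₁) :
    (∃ m M : ℝ, 0 < m ∧ m ≤ M ∧ ∀ t ∈ I, m ≤ a t ∧ a t ≤ M) ∧
    (∃ C : ℝ, ∀ t ∈ I, |a' t| ≤ C) := by
  set E : ℝ → ℝ := fun s => a' s ^ 2 / 2 + lam * Real.log (a s) + ξ ^ 2 / 2 * ((a s) ^ 2)⁻¹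
    with hE
  -- energy is conserved
  have hEderiv : ∀ t ∈ I, HasDerivWithinAt E 0 I t := by
    intro t ht
    have hne : a t ≠ 0 := (hpos t ht).ne'
    have h1 : HasDerivAt (fun s => a' s ^ 2 / 2) ((2 : ℕ) * a' t ^ 1 * a'' t / 2) t :=
      ((hd' t ht).pow 2).div_const 2
    have h2 : HasDerivAt (fun s => lam * Real.log (a s)) (lam * (a' t / a t)) t :=
      ((hd t ht).log hne).const_mul lam
    have h3 : HasDerivAt (fun s => ξ ^ 2 / 2 * ((a s) ^ 2)⁻¹)
        (ξ ^ 2 / 2 * (-((2 : ℕ) * a t ^ 1 * a' t) / ((a t) ^ 2) ^ 2)) t :=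
      (((hd t ht).pow 2).inv (pow_ne_zero 2 hne)).const_mul (ξ ^ 2 / 2)
    have htotal := (h1.add h2).add h3
    have hval : (2 : ℕ) * a' t ^ 1 * a'' t / 2 + lam * (a' t / a t)
        + ξ ^ 2 / 2 * (-((2 : ℕ) * a t ^ 1 * a' t) / ((a t) ^ 2) ^ 2) = 0 := by
      rw [hode t ht]
      field_simp
      ring
    rw [hval] at htotal
    exact htotal.hasDerivWithinAt
  have hEconst : ∀ t ∈ I, E t = E 0 := by
    intro t ht
    have hb := Convex.norm_image_sub_le_of_norm_hasDerivWithin_le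
      (f := E) (f' := fun _ => (0 : ℝ)) (C := 0)
      (fun x hx => hEderiv x hx) (fun x _ => by simp) hI h0 ht
    have habs : |E t - E 0| ≤ 0 := by simpa using hb
    have := abs_eq_zero.mp (le_antisymm habs (abs_nonneg _))
    linarith [sub_eq_zero.mp this]
  set E₀ : ℝ := E 0 with hE0
  set B : ℝ := E₀ + lam ^ 2 / ξ ^ 2 with hB
  set U : ℝ := 2 * Real.sqrt (max B 1) / |ξ| with hU
  have hξ2 : (0:ℝ) < ξ ^ 2 := by positivity
  have hsq : (0:ℝ) < Real.sqrt (max B 1) :=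
    Real.sqrt_pos.mpr (lt_of_lt_of_le one_pos (le_max_right _ _))
  have hξabs : (0:ℝ) < |ξ| := abs_pos.mpr hξ
  have hUpos : 0 < U := by positivity
  have hU2 : U ^ 2 = 4 * max B 1 / ξ ^ 2 := by
    rw [hU]
    rw [div_pow, mul_pow, Real.sq_sqrt (le_trans zero_le_one (le_max_right _ _)), sq_abs]
    ring
  set M : ℝ := Real.exp (E₀ / lam) with hM
  have hmain : ∀ t ∈ I, U⁻¹ ≤ a t ∧ a t ≤ M ∧ a' t ^ 2 ≤ 2 * (E₀ + lam * U) := by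
    intro t ht
    have hat : 0 < a t := hpos t ht
    have hcons : a' t ^ 2 / 2 + lam * Real.log (a t) + ξ ^ 2 / 2 * ((a t) ^ 2)⁻¹ = E₀ :=
      hEconst t ht
    set u : ℝ := (a t)⁻¹ with hu
    have hupos : 0 < u := inv_pos.mpr hat
    have huinv : ((a t) ^ 2)⁻¹ = u ^ 2 := by rw [hu, inv_pow]
    -- upper bound
    have hlogle : lam * Real.log (a t) ≤ E₀ := by
      nlinarith [sq_nonneg (a' t), sq_nonneg u, huinv, hξ2.le,
        mul_nonneg (mul_nonneg hξ2.le (by norm_num : (0:ℝ) ≤ 1/2)) (sq_nonneg u)]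
    have hub : a t ≤ M := by
      rw [hM, ← Real.log_le_iff_le_exp hat, le_div_iff₀ hlam]
      linarith
    -- bound on -log a
    have hloginv : -Real.log (a t) ≤ u := by
      have := Real.log_le_sub_one_of_pos hupos
      rw [hu, Real.log_inv] at this
      linarith
    -- lower bound on a
    have hq : ξ ^ 2 / 2 * u ^ 2 ≤ E₀ + lam * u := by
      have h1 : lam * (-Real.log (a t)) ≤ lam * u :=
        mul_le_mul_of_nonneg_left hloginv hlam.le
      nlinarith [sq_nonneg (a' t), huinv]
    have hsqe : (ξ ^ 2 * u / 2 - lam) ^ 2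
        = ξ ^ 2 * ξ ^ 2 * u ^ 2 / 4 - ξ ^ 2 * u * lam + lam ^ 2 := by ring
    have hsq2 : 0 ≤ ξ ^ 2 * ξ ^ 2 * u ^ 2 / 4 - ξ ^ 2 * u * lam + lam ^ 2 :=
      hsqe ▸ sq_nonneg _
    have key : u ^ 2 * ξ ^ 2 * ξ ^ 2 ≤ 4 * (ξ ^ 2 * E₀ + lam ^ 2) := by
      clear_value u E₀ B U M
      linarith [hsq2, mul_le_mul_of_nonneg_left hq hξ2.le]
    have hBle : 4 * B * ξ ^ 2 = 4 * (ξ ^ 2 * E₀ + lam ^ 2) := by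
      rw [hB]; field_simp
    have h5 : u ^ 2 * ξ ^ 2 ≤ 4 * B :=
      le_of_mul_le_mul_right (by linarith [key, hBle]) hξ2
    have hu2 : u ^ 2 ≤ U ^ 2 := by
      rw [hU2, le_div_iff₀ hξ2]
      linarith [h5, le_max_left B 1]
    have huU : u ≤ U := (pow_le_pow_iff_left₀ hupos.le hUpos.le (by norm_num)).mp hu2
    have hlb : U⁻¹ ≤ a t := by
      have := inv_anti₀ hupos huU
      rwa [hu, inv_inv] at this
    -- velocity bound
    have hvb : a' t ^ 2 ≤ 2 * (E₀ + lam * U) := by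
      have h1 : lam * (-Real.log (a t)) ≤ lam * u :=
        mul_le_mul_of_nonneg_left hloginv hlam.le
      have h2 : lam * u ≤ lam * U := mul_le_mul_of_nonneg_left huU hlam.le
      have h3 : 0 ≤ ξ ^ 2 / 2 * u ^ 2 := by positivity
      rw [huinv] at hcons
      linarith
    exact ⟨hlb, hub, hvb⟩
  constructor
  · refine ⟨U⁻¹, M, inv_pos.mpr hUpos, ?_, fun t ht => ⟨(hmain t ht).1, (hmain t ht).2.1⟩⟩
    exact le_trans (hmain 0 h0).1 (hmain 0 h0).2.1
  · refine ⟨Real.sqrt (max (2 * (E₀ + lam * U)) 0), fun t ht => ?_⟩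
    rw [← Real.sqrt_sq_eq_abs]
    exact Real.sqrt_le_sqrt (le_trans (hmain t ht).2.2 (le_max_left _ _))
end

section
/- Let λ > 0 and ξ ≠ 0 be real constants, let a₀ > 0 and a₁ ∈ ℝ with (a₀, a₁) ≠ (|ξ|/√λ, 0), and let a : ℝ → (0,∞) be the global solution of the Emden equation a''(t) = −λ/a(t) + ξ²/a(t)³ with a(0) = a₀ and a'(0) = a₁. Then a is non-trivially periodic: there exists T > 0 such that a(t + T) = a(t) for all t ∈ ℝ, and a is not a constant function. -/
/-!
The Emden equation is Newton's equation `a'' = -W'(a)` for the potential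
`W x = λ log x + ξ² / (2 x²)`, whose only critical point `|ξ| / √λ` is a strict global minimum.
Hence the energy `a'² / 2 + W a` is conserved, the orbit stays in a compact interval of `(0, ∞)`,
and since the initial data are not the equilibrium, the energy level contains no critical point
of `W`. Then `a'` vanishes at arbitrarily large times: otherwise `a` is eventually monotone and
converges, which forces first `a' → 0` and then `a'' → 0`, so the limit would be a critical point
on the energy level. By uniqueness for the ODE and time reversibility, `a` is symmetric about
every zero of `a'`, and two such reflections compose to a translation.
-/

open Set Filter Topology

theorem Function.periodic_of_reflect_eq {f : ℝ → ℝ} {t₀ t₁ : ℝ}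
    (h₀ : ∀ t, f (2 * t₀ - t) = f t) (h₁ : ∀ t, f (2 * t₁ - t) = f t) :
    Function.Periodic f (2 * (t₁ - t₀)) := fun t =>
  calc f (t + 2 * (t₁ - t₀)) = f (2 * t₁ - (t + 2 * (t₁ - t₀))) := (h₁ _).symm
    _ = f (2 * t₀ - t) := by ring_nf
    _ = f t := h₀ t

theorem eq_zero_of_tendsto_of_tendsto_abs_deriv {f : ℝ → ℝ} {L c : ℝ} (hf : Differentiable ℝ f)
    (hfL : Tendsto f atTop (𝓝 L)) (hf' : Tendsto (fun t => |deriv f t|) atTop (𝓝 c)) :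
    c = 0 := by
  have hmvt : ∀ t, ∃ s ∈ Ioo t (t + 1), deriv f s = f (t + 1) - f t := fun t => by
    simpa using exists_deriv_eq_slope f (lt_add_one t) hf.continuous.continuousOn
      hf.differentiableOn
  choose σ hσ hσf using hmvt
  have hσ_top : Tendsto σ atTop atTop := tendsto_atTop_mono (fun t => (hσ t).1.le) tendsto_id
  have h₁ : Tendsto (fun t => |f (t + 1) - f t|) atTop (𝓝 0) := by
    simpa using ((hfL.comp (tendsto_atTop_add_const_right _ 1 tendsto_id)).sub hfL).abs
  have h₂ : Tendsto (fun t => |f (t + 1) - f t|) atTop (𝓝 c) :=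
    (hf'.comp hσ_top).congr fun t => by simp only [Function.comp_apply, hσf]
  exact tendsto_nhds_unique h₂ h₁

theorem exists_tendsto_atTop_of_deriv_ne_zero {f : ℝ → ℝ} {s m M : ℝ} (hf : Differentiable ℝ f)
    (hf' : ∀ t ∈ Ioi s, deriv f t ≠ 0) (hbound : ∀ t, f t ∈ Icc m M) :
    ∃ L, Tendsto f atTop (𝓝 L) := by
  have hbdd : BddAbove (range fun t : Ioi s => f t) ∧ BddBelow (range fun t : Ioi s => f t) :=
    ⟨⟨M, by rintro _ ⟨t, rfl⟩; exact (hbound t).2⟩, ⟨m, by rintro _ ⟨t, rfl⟩; exact (hbound t).1⟩⟩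
  have hcont := hf.continuous.continuousOn (s := Ioi s)
  -- Darboux: a derivative that does not vanish on an interval has constant sign there.
  rcases hasDerivWithinAt_forall_lt_or_forall_gt_of_forall_ne (convex_Ioi s)
    (fun t _ => (hf t).hasDerivAt.hasDerivWithinAt) hf' with hneg | hpos
  · have hanti := (strictAntiOn_of_deriv_neg (convex_Ioi s) hcont
      (by rwa [interior_Ioi])).antitoneOn
    exact ⟨_, tendsto_comp_val_Ioi_atTop.1
      (tendsto_atTop_ciInf (antitoneOn_iff_antitone.1 hanti) hbdd.2)⟩
  · have hmono := (strictMonoOn_of_deriv_pos (convex_Ioi s) hcont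
      (by rwa [interior_Ioi])).monotoneOn
    exact ⟨_, tendsto_comp_val_Ioi_atTop.1
      (tendsto_atTop_ciSup (monotoneOn_iff_monotone.1 hmono) hbdd.1)⟩

structure IsNewtonSolution (F a : ℝ → ℝ) : Prop where
  differentiable : Differentiable ℝ a
  differentiable_deriv : Differentiable ℝ (deriv a)
  deriv_deriv : ∀ t, deriv (deriv a) t = F (a t)

namespace IsNewtonSolution

variable {F a : ℝ → ℝ}

theorem hasDerivAt (h : IsNewtonSolution F a) (t : ℝ) : HasDerivAt a (deriv a t) t :=
  (h.differentiable t).hasDerivAt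

theorem hasDerivAt_deriv (h : IsNewtonSolution F a) (t : ℝ) :
    HasDerivAt (deriv a) (F (a t)) t :=
  h.deriv_deriv t ▸ (h.differentiable_deriv t).hasDerivAt

theorem energy_eq {V : ℝ → ℝ} (h : IsNewtonSolution F a)
    (hV : ∀ t, HasDerivAt V (-F (a t)) (a t)) (t : ℝ) :
    deriv a t ^ 2 / 2 + V (a t) = deriv a 0 ^ 2 / 2 + V (a 0) := by
  have hE : ∀ t, HasDerivAt (fun t => deriv a t ^ 2 / 2 + V (a t)) 0 t := fun t => by
    refine ((((h.hasDerivAt_deriv t).fun_pow 2).div_const 2).fun_add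
      ((hV t).comp t (h.hasDerivAt t))).congr_deriv ?_
    ring
  exact is_const_of_deriv_eq_zero (fun t => (hE t).differentiableAt) (fun t => (hE t).deriv) t 0

theorem reflect_eq {K : NNReal} {S : Set ℝ} (h : IsNewtonSolution F a)
    (hF : LipschitzOnWith K F S) (hS : ∀ t, a t ∈ S) {t₀ : ℝ} (h₀ : deriv a t₀ = 0) (t : ℝ) :
    a (2 * t₀ - t) = a t := by
  have hv : LipschitzOnWith _ (fun p : ℝ × ℝ => (p.2, F p.1)) {p | p.1 ∈ S} :=
    LipschitzWith.prod_snd.lipschitzOnWith.prodMk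
      (hF.comp LipschitzWith.prod_fst.lipschitzOnWith fun _ hp => hp)
  -- `t ↦ (a (2t₀ - t), -a' (2t₀ - t))` solves the same first-order system as `(a, a')`
  -- and agrees with it at `t₀`.
  have hphase := ODE_solution_unique_univ (v := fun _ p => (p.2, F p.1)) (t₀ := t₀)
    (f := fun t => (a (2 * t₀ - t), -deriv a (2 * t₀ - t))) (g := fun t => (a t, deriv a t))
    (fun _ => hv) (fun t => ⟨?_, hS _⟩)
    (fun t => ⟨(h.hasDerivAt t).prodMk (h.hasDerivAt_deriv t), hS t⟩)
    (by rw [two_mul, add_sub_cancel_right, h₀, neg_zero])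
  · exact congrArg Prod.fst (congrFun hphase t)
  · have hrefl : HasDerivAt (fun t : ℝ => 2 * t₀ - t) (-1) t := by
      simpa using (hasDerivAt_id t).const_sub (2 * t₀)
    exact (((h.hasDerivAt _).comp t hrefl).prodMk
      ((h.hasDerivAt_deriv _).comp t hrefl).neg).congr_deriv (by simp)

theorem exists_deriv_eq_zero_gt {V : ℝ → ℝ} {E m M : ℝ} (h : IsNewtonSolution F a)
    (henergy : ∀ t, deriv a t ^ 2 / 2 + V (a t) = E) (hbound : ∀ t, a t ∈ Icc m M)
    (hF : ContinuousOn F (Icc m M)) (hV : ContinuousOn V (Icc m M))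
    (hno_eq : ∀ x ∈ Icc m M, F x = 0 → V x < E) (s : ℝ) : ∃ t, s < t ∧ deriv a t = 0 := by
  by_contra! hne
  obtain ⟨L, hL⟩ := exists_tendsto_atTop_of_deriv_ne_zero h.differentiable hne hbound
  have hLmem : L ∈ Icc m M := isClosed_Icc.mem_of_tendsto hL (.of_forall hbound)
  have hL' : Tendsto a atTop (𝓝[Icc m M] L) := tendsto_nhdsWithin_iff.2 ⟨hL, .of_forall hbound⟩
  have hspeed : Tendsto (fun t => |deriv a t|) atTop (𝓝 √(2 * (E - V L))) := by
    have habs : ∀ t, |deriv a t| = √(2 * (E - V (a t))) := fun t => by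
      rw [← henergy t, ← Real.sqrt_sq_eq_abs]
      ring_nf
    simp_rw [habs]
    exact (((hV L hLmem).tendsto.comp hL').const_sub E |>.const_mul 2).sqrt
  have hspeed_zero := eq_zero_of_tendsto_of_tendsto_abs_deriv h.differentiable hL hspeed
  have hVL : E ≤ V L := by
    have := Real.sqrt_eq_zero'.1 hspeed_zero
    linarith
  have hd0 : Tendsto (deriv a) atTop (𝓝 0) := by
    rw [tendsto_zero_iff_abs_tendsto_zero, ← hspeed_zero]
    exact hspeed
  have hFL : |F L| = 0 := eq_zero_of_tendsto_of_tendsto_abs_deriv h.differentiable_deriv hd0 <| by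
    simp_rw [h.deriv_deriv]
    exact ((hF L hLmem).tendsto.comp hL').abs
  exact (hno_eq L hLmem (abs_eq_zero.1 hFL)).not_ge hVL

end IsNewtonSolution

noncomputable def emdenForce (lam ξ x : ℝ) : ℝ := -lam / x + ξ ^ 2 / x ^ 3

noncomputable def emdenPotential (lam ξ x : ℝ) : ℝ := lam * Real.log x + ξ ^ 2 / (2 * x ^ 2)

section Emden

variable {lam ξ x : ℝ}

theorem hasDerivAt_emdenPotential (hx : x ≠ 0) :
    HasDerivAt (emdenPotential lam ξ) (-emdenForce lam ξ x) x := by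
  have := ((Real.hasDerivAt_log hx).const_mul lam).add
    (((hasDerivAt_pow 2 x).const_mul 2).inv (by positivity) |>.const_mul (ξ ^ 2))
  refine this.congr_deriv ?_ |>.congr_of_eventuallyEq (.of_forall fun y => ?_)
  · unfold emdenForce; field_simp; ring
  · unfold emdenPotential; simp [div_eq_mul_inv]

theorem contDiffOn_emdenForce {n : WithTop ℕ∞} {s : Set ℝ} (hs : ∀ x ∈ s, x ≠ 0) :
    ContDiffOn ℝ n (emdenForce lam ξ) s := by
  unfold emdenForce
  fun_prop (disch := simp_all)

theorem continuousOn_emdenPotential {s : Set ℝ} (hs : ∀ x ∈ s, x ≠ 0) :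
    ContinuousOn (emdenPotential lam ξ) s := by
  unfold emdenPotential
  fun_prop (disch := simp_all)

theorem eq_of_emdenForce_eq_zero (hlam : 0 < lam) (hx : 0 < x)
    (h : emdenForce lam ξ x = 0) : x = |ξ| / √lam := by
  unfold emdenForce at h
  have hsq : (x * √lam) ^ 2 = |ξ| ^ 2 := by
    rw [mul_pow, Real.sq_sqrt hlam.le, sq_abs]
    field_simp at h
    linarith
  rw [eq_div_iff (Real.sqrt_pos.2 hlam).ne']
  exact (pow_left_inj₀ (by positivity) (abs_nonneg ξ) two_ne_zero).1 hsq

theorem emdenPotential_sub_equilibrium (hlam : 0 < lam) (hξ : ξ ≠ 0) (hx : 0 < x) :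
    emdenPotential lam ξ x - emdenPotential lam ξ (|ξ| / √lam)
      = lam / 2 * (ξ ^ 2 / (lam * x ^ 2) - 1 - Real.log (ξ ^ 2 / (lam * x ^ 2))) := by
  have hξ2 : 0 < ξ ^ 2 := by positivity
  have hlog : Real.log (ξ ^ 2 / (lam * x ^ 2))
      = Real.log (ξ ^ 2) - Real.log lam - 2 * Real.log x := by
    rw [Real.log_div hξ2.ne' (by positivity), Real.log_mul hlam.ne' (by positivity),
      Real.log_pow x 2]
    push_cast; ring
  have hlog_eq : Real.log (|ξ| / √lam) = (Real.log (ξ ^ 2) - Real.log lam) / 2 := by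
    rw [Real.log_div (by positivity) (by positivity), Real.log_sqrt hlam.le, ← sq_abs,
      Real.log_pow]
    push_cast; ring
  unfold emdenPotential
  rw [hlog, hlog_eq, div_pow, sq_abs, Real.sq_sqrt hlam.le]
  field_simp
  ring

theorem emdenPotential_equilibrium_le (hlam : 0 < lam) (hξ : ξ ≠ 0) (hx : 0 < x) :
    emdenPotential lam ξ (|ξ| / √lam) ≤ emdenPotential lam ξ x := by
  have := emdenPotential_sub_equilibrium hlam hξ hx
  have := Real.log_le_sub_one_of_pos (x := ξ ^ 2 / (lam * x ^ 2)) (by positivity)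
  nlinarith

theorem emdenPotential_equilibrium_lt (hlam : 0 < lam) (hξ : ξ ≠ 0) (hx : 0 < x)
    (hne : x ≠ |ξ| / √lam) :
    emdenPotential lam ξ (|ξ| / √lam) < emdenPotential lam ξ x := by
  have := emdenPotential_sub_equilibrium hlam hξ hx
  have hu : ξ ^ 2 / (lam * x ^ 2) ≠ 1 := fun hu => hne <|
    eq_of_emdenForce_eq_zero hlam hx (by unfold emdenForce; field_simp at hu ⊢; linarith)
  have := Real.log_lt_sub_one_of_pos (by positivity) hu
  nlinarith

theorem emdenPotential_equilibrium_lt_energy {a₀ a₁ : ℝ} (hlam : 0 < lam) (hξ : ξ ≠ 0)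
    (ha₀ : 0 < a₀) (hne : ¬(a₀ = |ξ| / √lam ∧ a₁ = 0)) :
    emdenPotential lam ξ (|ξ| / √lam) < a₁ ^ 2 / 2 + emdenPotential lam ξ a₀ := by
  rcases not_and_or.1 hne with ha₀ne | ha₁ne
  · have := emdenPotential_equilibrium_lt hlam hξ ha₀ ha₀ne
    nlinarith [sq_nonneg a₁]
  · have := emdenPotential_equilibrium_le hlam hξ ha₀
    nlinarith [sq_pos_of_ne_zero ha₁ne]

theorem exists_Icc_of_emdenPotential_le (hlam : 0 < lam) (hξ : ξ ≠ 0) (E : ℝ) :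
    ∃ m M, 0 < m ∧ ∀ ⦃x⦄, 0 < x → emdenPotential lam ξ x ≤ E → x ∈ Icc m M := by
  have hc : 0 < lam + |E - lam| := by positivity
  refine ⟨ξ ^ 2 / (2 * (lam + |E - lam|) + ξ ^ 2), Real.exp (E / lam), by positivity,
    fun x hx hE => ⟨?_, ?_⟩⟩
  · -- `log x ≥ 1 - 1/x` turns `W x ≤ E` into a quadratic inequality in `1/x`.
    have hlog := mul_le_mul_of_nonneg_left (Real.one_sub_inv_le_log_of_pos hx) hlam.le
    have hquad : ξ ^ 2 ≤ 2 * lam * x + 2 * (E - lam) * x ^ 2 := by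
      unfold emdenPotential at hE
      have : lam * (1 - x⁻¹) + ξ ^ 2 / (2 * x ^ 2) ≤ E := by linarith
      field_simp at this
      nlinarith
    by_contra! hlt
    rw [lt_div_iff₀ (by positivity)] at hlt
    nlinarith [le_abs_self (E - lam), abs_nonneg (E - lam), sq_pos_of_ne_zero hξ]
  · rw [← Real.log_le_iff_le_exp hx, le_div_iff₀' hlam]
    unfold emdenPotential at hE
    have : 0 ≤ ξ ^ 2 / (2 * x ^ 2) := by positivity
    linarith

end Emden

/-- For `λ > 0`, `ξ ≠ 0`, and initial data `(a₀, a₁) ≠ (|ξ|/√λ, 0)` with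
`a₀ > 0`, the global positive solution of the Emden equation `a'' = −λ/a + ξ²/a³` with
`a(0) = a₀`, `a'(0) = a₁` is non-trivially periodic: there is `T > 0` with
`a(t + T) = a(t)` for all `t`, and `a` is not constant. -/
theorem emden_solution_periodic
    (lam ξ a₀ a₁ : ℝ) (hlam : 0 < lam) (hξ : ξ ≠ 0) (ha₀ : 0 < a₀)
    (hnontriv : ¬(a₀ = |ξ| / Real.sqrt lam ∧ a₁ = 0))
    (a : ℝ → ℝ)
    (hreg : ContDiff ℝ 2 a)
    (hpos : ∀ t, 0 < a t)
    (hode : ∀ t, deriv (deriv a) t = -lam / a t + ξ ^ 2 / (a t) ^ 3)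
    (hinit : a 0 = a₀) (hinit' : deriv a 0 = a₁) :
    (∃ T : ℝ, 0 < T ∧ ∀ t, a (t + T) = a t) ∧ ¬(∃ c : ℝ, ∀ t, a t = c) := by
  subst hinit hinit'
  have hsol : IsNewtonSolution (emdenForce lam ξ) a :=
    ⟨hreg.differentiable two_ne_zero, hreg.differentiable_deriv_two, hode⟩
  set E := deriv a 0 ^ 2 / 2 + emdenPotential lam ξ (a 0)
  have henergy : ∀ t, deriv a t ^ 2 / 2 + emdenPotential lam ξ (a t) = E :=
    hsol.energy_eq fun t => hasDerivAt_emdenPotential (hpos t).ne'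
  obtain ⟨m, M, hm, hsublevel⟩ := exists_Icc_of_emdenPotential_le hlam hξ E
  have hbound : ∀ t, a t ∈ Icc m M := fun t => hsublevel (hpos t) (by nlinarith [henergy t])
  have hnz : ∀ x ∈ Icc m M, x ≠ 0 := fun x hx => (hm.trans_le hx.1).ne'
  have hno_eq : ∀ x ∈ Icc m M, emdenForce lam ξ x = 0 → emdenPotential lam ξ x < E :=
    fun x hx h0 => eq_of_emdenForce_eq_zero hlam (hm.trans_le hx.1) h0 ▸
      emdenPotential_equilibrium_lt_energy hlam hξ ha₀ hnontriv
  obtain ⟨K, hK⟩ := (contDiffOn_emdenForce (lam := lam) (ξ := ξ) (n := 1) hnz)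
    |>.exists_lipschitzOnWith one_ne_zero (convex_Icc m M) isCompact_Icc
  have hturn := hsol.exists_deriv_eq_zero_gt henergy hbound
    (contDiffOn_emdenForce (n := 0) hnz).continuousOn (continuousOn_emdenPotential hnz) hno_eq
  obtain ⟨t₀, -, h₀⟩ := hturn 0
  obtain ⟨t₁, h01, h₁⟩ := hturn t₀
  refine ⟨⟨2 * (t₁ - t₀), by linarith, Function.periodic_of_reflect_eq
    (hsol.reflect_eq hK hbound h₀) (hsol.reflect_eq hK hbound h₁)⟩, ?_⟩
  rintro ⟨c, hc⟩
  obtain rfl : a = fun _ => c := funext hc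
  have hF : emdenForce lam ξ c = 0 := by simpa using (hsol.deriv_deriv 0).symm
  exact (hno_eq c (hbound 0) hF).ne (by simpa using henergy 0)
end

section
/- Let ξ ∈ ℝ and let a : ℝ → ℝ be twice continuously differentiable with a(t) > 0 for all t. Define the planar velocity field u₁(t,x,y) = (a'(t)/a(t))·x − (ξ/a(t)²)·y and u₂(t,x,y) = (ξ/a(t)²)·x + (a'(t)/a(t))·y. Then the material derivative of this field satisfies, at every (t,x,y), ∂u₁/∂t + u₁·∂u₁/∂x + u₂·∂u₁/∂y = (a''(t)/a(t) − ξ²/a(t)⁴)·x and ∂u₂/∂t + u₁·∂u₂/∂x + u₂·∂u₂/∂y = (a''(t)/a(t) − ξ²/a(t)⁴)·y. -/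
/-!
The field is linear in space, `u(t, p) = A(t) p` with `A = α I + β J`, `α = a'/a`, `β = ξ/a²`,
so its material derivative is `(A' + A²) p`. Since `α' + α² = a''/a` and `β' = -2αβ`,
the rotational parts cancel and `A' + A² = (a''/a - ξ²/a⁴) I`.
-/

noncomputable def materialDerivative (u₁ u₂ f : ℝ → ℝ → ℝ → ℝ) (t x y : ℝ) : ℝ :=
  deriv (fun τ => f τ x y) t + u₁ t x y * deriv (fun χ => f t χ y) x
    + u₂ t x y * deriv (fun υ => f t x υ) y

theorem materialDerivative_of_linear {u₁ u₂ f : ℝ → ℝ → ℝ → ℝ} {α γ : ℝ → ℝ} {α' γ' t : ℝ}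
    (hf : ∀ t x y, f t x y = α t * x + γ t * y) (hα : HasDerivAt α α' t)
    (hγ : HasDerivAt γ γ' t) (x y : ℝ) :
    materialDerivative u₁ u₂ f t x y = α' * x + γ' * y + u₁ t x y * α t + u₂ t x y * γ t := by
  have hf' : f = fun t x y => α t * x + γ t * y := funext₃ hf
  subst hf'
  have ht : HasDerivAt (fun τ => α τ * x + γ τ * y) (α' * x + γ' * y) t :=
    (hα.mul_const x).add (hγ.mul_const y)
  have hx : HasDerivAt (fun χ => α t * χ + γ t * y) (α t) x := by
    simpa using ((hasDerivAt_id x).const_mul (α t)).add_const (γ t * y)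
  have hy : HasDerivAt (fun υ => α t * x + γ t * υ) (γ t) y := by
    simpa using ((hasDerivAt_id y).const_mul (γ t)).const_add (α t * x)
  rw [materialDerivative, ht.deriv, hx.deriv, hy.deriv]

theorem hasDerivAt_deriv_div_self {a : ℝ → ℝ} {t : ℝ} (ha : DifferentiableAt ℝ a t)
    (ha' : DifferentiableAt ℝ (deriv a) t) (h0 : a t ≠ 0) :
    HasDerivAt (fun τ => deriv a τ / a τ)
      (deriv (deriv a) t / a t - (deriv a t / a t) ^ 2) t := by
  refine (ha'.hasDerivAt.div ha.hasDerivAt h0).congr_deriv ?_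
  field_simp

theorem hasDerivAt_const_div_sq {a : ℝ → ℝ} {a' t : ℝ} (ξ : ℝ) (ha : HasDerivAt a a' t)
    (h0 : a t ≠ 0) :
    HasDerivAt (fun τ => ξ / a τ ^ 2) (-2 * (a' / a t) * (ξ / a t ^ 2)) t := by
  refine ((hasDerivAt_const t ξ).div (ha.fun_pow 2) (pow_ne_zero 2 h0)).congr_deriv ?_
  field_simp
  ring

/-- For the planar velocity field
`u₁(t,x,y) = (a'(t)/a(t))·x − (ξ/a(t)²)·y`, `u₂(t,x,y) = (ξ/a(t)²)·x + (a'(t)/a(t))·y`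
with `a` twice continuously differentiable and positive, the material derivative satisfies
`∂u₁/∂t + u₁·∂u₁/∂x + u₂·∂u₁/∂y = (a''/a − ξ²/a⁴)·x` and
`∂u₂/∂t + u₁·∂u₂/∂x + u₂·∂u₂/∂y = (a''/a − ξ²/a⁴)·y` at every point. -/
theorem material_derivative_rotational_field
    (ξ : ℝ) (a : ℝ → ℝ) (hreg : ContDiff ℝ 2 a) (hpos : ∀ t, 0 < a t)
    (u₁ u₂ : ℝ → ℝ → ℝ → ℝ)
    (hu₁ : ∀ t x y, u₁ t x y = (deriv a t / a t) * x - (ξ / (a t) ^ 2) * y)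
    (hu₂ : ∀ t x y, u₂ t x y = (ξ / (a t) ^ 2) * x + (deriv a t / a t) * y) :
    ∀ t x y,
      deriv (fun τ => u₁ τ x y) t
          + u₁ t x y * deriv (fun χ => u₁ t χ y) x
          + u₂ t x y * deriv (fun υ => u₁ t x υ) y
        = (deriv (deriv a) t / a t - ξ ^ 2 / (a t) ^ 4) * x ∧
      deriv (fun τ => u₂ τ x y) t
          + u₁ t x y * deriv (fun χ => u₂ t χ y) x
          + u₂ t x y * deriv (fun υ => u₂ t x υ) y
        = (deriv (deriv a) t / a t - ξ ^ 2 / (a t) ^ 4) * y := by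
  intro t x y
  have h0 : a t ≠ 0 := (hpos t).ne'
  have ha : DifferentiableAt ℝ a t := hreg.differentiable (by norm_num) t
  have hα := hasDerivAt_deriv_div_self ha (hreg.differentiable_deriv_two t) h0
  have hβ := hasDerivAt_const_div_sq ξ ha.hasDerivAt h0
  have hu₁' : ∀ t x y, u₁ t x y = deriv a t / a t * x + -(ξ / a t ^ 2) * y := fun t x y => by
    rw [hu₁]; ring
  change materialDerivative u₁ u₂ u₁ t x y = _ ∧ materialDerivative u₁ u₂ u₂ t x y = _
  rw [materialDerivative_of_linear hu₁' hα hβ.neg, materialDerivative_of_linear hu₂ hβ hα,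
    hu₁, hu₂]
  constructor <;> field_simp <;> ring
end
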